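/- arXiv:0806.1705 — 2 statements merged into one kernel-verified Lean document; each statement's English description precedes it below -/
import Mathlib

section
/- Let Γ ≤ PSL(2n+1,ℂ) be a Schottky group acting on ℙ^{2n}_ℂ. Then the complement ℙ^{2n}_ℂ \ Ω(Γ) does not contain any projective subspace of dimension ≥ n. -/
/-!
Let `P = ℙ(W)`. It is connected and misses `Ω ⊇ F`, so it lies in the union of the open sets
`Rⱼ, Sⱼ`; their closures being pairwise disjoint, `P` lies in one of them, and since `g ≥ 2`
there is a `k` such that this one is neither `R_k` nor `S_k`. As `dim W > (2n+1)/2`, `P` meets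
its image `γ_k P`, say at `γ_k x` with `x ∈ P`. But `x ∉ R_k`, so the pairing
`γ_k R_k = (closure S_k)ᶜ` forces `γ_k x ∈ closure S_k`, which is disjoint from `P`.
-/

open Projectivization Matrix Filter Pointwise
open scoped LinearAlgebra.Projectivization

noncomputable section

/-- Complex projective space `ℙ^{N-1}_ℂ`, as the projectivization of `ℂ^N`. -/
abbrev PV (N : ℕ) := ℙ ℂ (Fin N → ℂ)

instance (N : ℕ) : TopologicalSpace (PV N) :=
  inferInstanceAs (TopologicalSpace (Quotient _))

/-- The action of `SL(N, ℂ)` on projective space. -/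
instance (N : ℕ) : SMul (SpecialLinearGroup (Fin N) ℂ) (PV N) :=
  ⟨fun A => Projectivization.map (SpecialLinearGroup.toLin' A).toLinearMap
      (SpecialLinearGroup.toLin' A).injective⟩

theorem SL_smul_mk {N : ℕ} (A : SpecialLinearGroup (Fin N) ℂ) (v : Fin N → ℂ) (hv : v ≠ 0) :
    A • Projectivization.mk ℂ v hv =
      Projectivization.mk ℂ (SpecialLinearGroup.toLin' A v)
        (by simpa using (SpecialLinearGroup.toLin' A).map_ne_zero_iff.mpr hv) :=
  Projectivization.map_mk _ _ v hv

instance (N : ℕ) : MulAction (SpecialLinearGroup (Fin N) ℂ) (PV N) where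
  one_smul x := by
    induction x using Projectivization.ind with
    | h v hv => rw [SL_smul_mk]; simp
  mul_smul A B x := by
    induction x using Projectivization.ind with
    | h v hv =>
      rw [SL_smul_mk, SL_smul_mk, SL_smul_mk]
      simp only [_root_.map_mul]
      rfl

theorem center_smul_eq {N : ℕ} {C : SpecialLinearGroup (Fin N) ℂ}
    (hC : C ∈ Subgroup.center (SpecialLinearGroup (Fin N) ℂ)) (x : PV N) : C • x = x := by
  obtain ⟨r, hrN, hr⟩ := Matrix.SpecialLinearGroup.mem_center_iff.mp hC
  induction x using Projectivization.ind with
  | h v hv =>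
    rcases Nat.eq_zero_or_pos N with hN | hN
    · subst hN
      exact absurd (Subsingleton.elim v 0) hv
    have hr0 : r ≠ 0 := by
      intro h0
      rw [h0, zero_pow (by simpa using hN.ne')] at hrN
      exact zero_ne_one hrN
    rw [SL_smul_mk]
    symm
    rw [Projectivization.mk_eq_mk_iff']
    refine ⟨r⁻¹, ?_⟩
    have hCv : SpecialLinearGroup.toLin' C v = r • v := by
      rw [SpecialLinearGroup.toLin'_apply, Matrix.toLin'_apply, ← hr]
      ext i
      simp [Matrix.mulVec, dotProduct, Matrix.scalar_apply, Matrix.diagonal,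
        Finset.sum_ite_eq]
    rw [hCv, smul_smul, inv_mul_cancel₀ hr0, one_smul]

/-- The projective special linear group `PSL(N, ℂ)`. -/
abbrev PSL (N : ℕ) :=
  SpecialLinearGroup (Fin N) ℂ ⧸ Subgroup.center (SpecialLinearGroup (Fin N) ℂ)

instance (N : ℕ) : SMul (PSL N) (PV N) :=
  ⟨fun g x => Quotient.liftOn' g (fun A => A • x) (by
    intro A B h
    rw [QuotientGroup.leftRel_apply] at h
    try simp only
    have hB : B = A * (A⁻¹ * B) := by group
    rw [hB, mul_smul, center_smul_eq h])⟩

theorem PSL_mk_smul {N : ℕ} (A : SpecialLinearGroup (Fin N) ℂ) (x : PV N) :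
    (QuotientGroup.mk A : PSL N) • x = A • x := rfl

instance (N : ℕ) : MulAction (PSL N) (PV N) where
  one_smul x := by
    rw [show (1 : PSL N) = QuotientGroup.mk 1 from rfl, PSL_mk_smul, one_smul]
  mul_smul g h x := by
    induction g using QuotientGroup.induction_on with
    | H A =>
      induction h using QuotientGroup.induction_on with
      | H B =>
        rw [show (QuotientGroup.mk A * QuotientGroup.mk B : PSL N) = QuotientGroup.mk (A * B)
          from rfl, PSL_mk_smul, PSL_mk_smul, PSL_mk_smul, mul_smul]

/-- The data of a Schottky group in `PSL(N, ℂ)` acting on `ℙ^{N-1}_ℂ`: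
`2g` open sets (`g ≥ 2`), each equal to the interior of its closure, with pairwise
disjoint closures, together with `g` generators `γ_j` satisfying
`γ_j (R_j) = ℙ^{N-1}_ℂ \ closure (S_j)`. -/
structure SchottkyData (N g : ℕ) where
  hg : 2 ≤ g
  R : Fin g → Set (PV N)
  S : Fin g → Set (PV N)
  gen : Fin g → PSL N
  Ropen : ∀ j, IsOpen (R j)
  Sopen : ∀ j, IsOpen (S j)
  Rreg : ∀ j, interior (closure (R j)) = R j
  Sreg : ∀ j, interior (closure (S j)) = S j
  disj : Pairwise (Function.onFun Disjoint
    (Sum.elim (fun j => closure (R j)) (fun j => closure (S j)) : Fin g ⊕ Fin g → Set (PV N)))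
  pair : ∀ j, gen j • R j = (closure (S j))ᶜ

namespace SchottkyData

variable {N g : ℕ}

/-- The Schottky group itself: the subgroup generated by the Schottky generators. -/
def Γ (D : SchottkyData N g) : Subgroup (PSL N) := Subgroup.closure (Set.range D.gen)

/-- The fundamental region `F(Γ) = ℙ^{N-1}_ℂ \ ⋃ⱼ (Rⱼ ∪ Sⱼ)`. -/
def F (D : SchottkyData N g) : Set (PV N) := (⋃ j, D.R j ∪ D.S j)ᶜ

/-- The region `Ω(Γ) = ⋃_{γ ∈ Γ} γ (F(Γ))`. -/
def Ω (D : SchottkyData N g) : Set (PV N) := ⋃ γ ∈ D.Γ, γ • D.F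

end SchottkyData

namespace Projectivization

variable {K V : Type*} [DivisionRing K] [AddCommGroup V] [Module K V]

theorem mk_rep_mem_iff (W : Submodule K V) (v : V) (hv : v ≠ 0) :
    (mk K v hv).rep ∈ W ↔ v ∈ W := by
  obtain ⟨a, ha⟩ := exists_smul_eq_mk_rep K v hv
  rw [← ha, Units.smul_def, Submodule.smul_mem_iff _ a.ne_zero]

theorem nonempty_setOf_rep_mem {W : Submodule K V} (hW : W ≠ ⊥) :
    {x : ℙ K V | x.rep ∈ W}.Nonempty := by
  obtain ⟨v, hvW, hv⟩ := W.exists_mem_ne_zero_of_ne_bot hW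
  exact ⟨mk K v hv, (mk_rep_mem_iff W v hv).2 hvW⟩

end Projectivization

/-- `ℙ(W)` is the image of `W \ {0}`, which is connected since `W` has real dimension `≥ 2`. -/
theorem isPreconnected_setOf_rep_mem {N : ℕ} (W : Submodule ℂ (Fin N → ℂ)) :
    IsPreconnected {x : PV N | x.rep ∈ W} := by
  rcases eq_or_ne W ⊥ with rfl | hW
  · convert isPreconnected_empty (α := PV N)
    simp [Projectivization.rep_nonzero]
  have hrank : 1 < Module.rank ℝ W := by
    have : Nontrivial W := Submodule.nontrivial_iff_ne_bot.2 hW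
    have h1 : 1 ≤ Module.rank ℂ W := Cardinal.one_le_iff_ne_zero.2 rank_pos.ne'
    rw [rank_real_of_complex]
    calc (1 : Cardinal) < 2 := Nat.one_lt_ofNat
      _ ≤ 2 * Module.rank ℂ W := le_mul_of_one_le_right' h1
  have hconn : PreconnectedSpace ({0}ᶜ : Set W) :=
    isPreconnected_iff_preconnectedSpace.1
      (isConnected_compl_singleton_of_one_lt_rank hrank 0).isPreconnected
  let q : ({0}ᶜ : Set W) → PV N := fun v =>
    Projectivization.mk ℂ (v : Fin N → ℂ) (fun h => v.2 (Subtype.ext h))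
  have hq : Continuous q := continuous_quotient_mk'.comp (by fun_prop)
  convert isPreconnected_range hq
  ext x
  refine ⟨fun hx => ⟨⟨⟨x.rep, hx⟩, fun h => x.rep_nonzero (congrArg Subtype.val h)⟩, x.mk_rep⟩,
    ?_⟩
  rintro ⟨v, rfl⟩
  exact (Projectivization.mk_rep_mem_iff W _ _).2 v.1.2

theorem Submodule.exists_mem_inf_ne_zero_of_finrank_lt {K V : Type*} [DivisionRing K]
    [AddCommGroup V] [Module K V] [FiniteDimensional K V] {s t : Submodule K V}
    (h : Module.finrank K V < Module.finrank K s + Module.finrank K t) :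
    ∃ v ∈ s, v ∈ t ∧ v ≠ 0 := by
  by_contra! H
  exact h.not_ge (Submodule.finrank_add_finrank_le_of_disjoint (Submodule.disjoint_def.2 H))

theorem exists_rep_mem_and_smul_rep_mem {N : ℕ} (γ : PSL N) (W : Submodule ℂ (Fin N → ℂ))
    (hW : N < 2 * Module.finrank ℂ W) :
    ∃ x : PV N, x.rep ∈ W ∧ (γ • x).rep ∈ W := by
  obtain ⟨A, rfl⟩ := QuotientGroup.mk_surjective γ
  set e := SpecialLinearGroup.toLin' A
  have hdim : Module.finrank ℂ (W.comap e.toLinearMap) = Module.finrank ℂ W := by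
    rw [Submodule.comap_equiv_eq_map_symm, LinearEquiv.finrank_map_eq]
  obtain ⟨v, hvW, hevW, hv⟩ := Submodule.exists_mem_inf_ne_zero_of_finrank_lt
    (s := W) (t := W.comap e.toLinearMap) (by rw [Module.finrank_fin_fun, hdim]; omega)
  refine ⟨Projectivization.mk ℂ v hv, (Projectivization.mk_rep_mem_iff W v hv).2 hvW, ?_⟩
  rw [PSL_mk_smul, SL_smul_mk, Projectivization.mk_rep_mem_iff]
  exact hevW

theorem IsPreconnected.exists_subset_of_subset_iUnion {X ι : Type*} [TopologicalSpace X]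
    {s : Set X} {U : ι → Set X} (hs : IsPreconnected s) (hne : s.Nonempty)
    (hU : ∀ i, IsOpen (U i)) (hdisj : Pairwise (Function.onFun Disjoint U))
    (hsU : s ⊆ ⋃ i, U i) :
    ∃ i, s ⊆ U i := by
  obtain ⟨x, hx⟩ := hne
  obtain ⟨i, hi⟩ := Set.mem_iUnion.1 (hsU hx)
  refine ⟨i, hs.subset_left_of_subset_union (hU i) (isOpen_biUnion fun j _ => hU j)
    (Set.disjoint_iUnion₂_right.2 fun j hj => hdisj (Ne.symm hj)) ?_ ⟨x, hx, hi⟩⟩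
  intro y hy
  obtain ⟨j, hj⟩ := Set.mem_iUnion.1 (hsU hy)
  rcases eq_or_ne j i with rfl | hji
  · exact Or.inl hj
  · exact Or.inr (Set.mem_biUnion hji hj)

theorem Sum.exists_ne_inl_and_ne_inr {α : Type*} [Nontrivial α] (i : α ⊕ α) :
    ∃ k, i ≠ Sum.inl k ∧ i ≠ Sum.inr k := by
  rcases i with j | j <;> obtain ⟨k, hk⟩ := exists_ne j
  · exact ⟨k, fun h => hk (Sum.inl_injective h).symm, Sum.inl_ne_inr⟩
  · exact ⟨k, Sum.inr_ne_inl, fun h => hk (Sum.inr_injective h).symm⟩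

theorem smul_mem_of_smul_set_eq_compl {G α : Type*} [Group G] [MulAction G α] {γ : G}
    {A B : Set α} (h : γ • A = Bᶜ) {x : α} (hx : x ∉ A) : γ • x ∈ B := by
  by_contra hB
  exact hx (Set.smul_mem_smul_set_iff.1 (h ▸ hB : γ • x ∈ γ • A))

namespace SchottkyData

variable {N g : ℕ} (D : SchottkyData N g)

def piece : Fin g ⊕ Fin g → Set (PV N) := Sum.elim D.R D.S

theorem isOpen_piece : ∀ i, IsOpen (D.piece i)
  | .inl j => D.Ropen j
  | .inr j => D.Sopen j

theorem disjoint_piece_closure_piece {i j : Fin g ⊕ Fin g} (hij : i ≠ j) :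
    Disjoint (D.piece i) (closure (D.piece j)) := by
  have h := D.disj hij
  rcases i with i | i <;> rcases j with j | j <;>
    exact h.mono_left subset_closure

theorem pairwise_disjoint_piece : Pairwise (Function.onFun Disjoint D.piece) := fun _ _ hij =>
  (D.disjoint_piece_closure_piece hij).mono_right subset_closure

theorem compl_Ω_subset_iUnion_piece : D.Ωᶜ ⊆ ⋃ i, D.piece i := by
  intro x hx
  have hxF : x ∉ D.F := fun hF =>
    hx (Set.mem_biUnion D.Γ.one_mem (by rwa [one_smul]))
  obtain ⟨j, hj | hj⟩ := Set.mem_iUnion.1 (not_not.1 hxF)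
  exacts [Set.mem_iUnion.2 ⟨.inl j, hj⟩, Set.mem_iUnion.2 ⟨.inr j, hj⟩]

end SchottkyData

/-- If `Γ ≤ PSL(2n+1, ℂ)` is a Schottky group acting on `ℙ^{2n}_ℂ`, then the complement
`ℙ^{2n}_ℂ \ Ω(Γ)` contains no projective subspace of (projective) dimension `≥ n`, i.e. no
projectivization of a linear subspace `W ⊆ ℂ^{2n+1}` with `dim W ≥ n + 1`. -/
theorem schottky_complement_no_large_subspace (n g : ℕ) (D : SchottkyData (2 * n + 1) g) :
    ¬ ∃ W : Submodule ℂ (Fin (2 * n + 1) → ℂ),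
        n + 1 ≤ Module.finrank ℂ W ∧
        {x : PV (2 * n + 1) | x.rep ∈ W} ⊆ D.Ωᶜ := by
  rintro ⟨W, hW, hWΩ⟩
  have hW0 : W ≠ ⊥ := by
    rintro rfl
    simp at hW
  obtain ⟨i, hi⟩ := (isPreconnected_setOf_rep_mem W).exists_subset_of_subset_iUnion
    (Projectivization.nonempty_setOf_rep_mem hW0) D.isOpen_piece D.pairwise_disjoint_piece
    (hWΩ.trans D.compl_Ω_subset_iUnion_piece)
  have : Nontrivial (Fin g) := Fin.nontrivial_iff_two_le.2 D.hg
  obtain ⟨k, hiR, hiS⟩ := i.exists_ne_inl_and_ne_inr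
  obtain ⟨x, hx, hγx⟩ := exists_rep_mem_and_smul_rep_mem (D.gen k) W (by omega)
  have hxR : x ∉ D.R k := fun hxR =>
    (D.disjoint_piece_closure_piece hiR).notMem_of_mem_left (hi hx) (subset_closure hxR)
  exact (D.disjoint_piece_closure_piece hiS).notMem_of_mem_left (hi hγx)
    (smul_mem_of_smul_set_eq_compl (D.pair k) hxR)
end
end

section
/- Let γ ∈ PSL(n+1,ℂ) with a lift γ̃ whose eigenvalue absolute values are r_1 < r_2 < … < r_k, giving a decomposition ℂ^{n+1} = V_1 ⊕ … ⊕ V_k where γ̃ restricted to V_j equals r_j γ_j with γ_j having unitary eigenvalues. Then for any [v] ∈ ℙ^n_ℂ with v = Σ v_j, v_j ∈ V_j, and j_0 = max{j : v_j ≠ 0}, every cluster point of {γ^m([v])}_{m∈ℕ} lies in the projectivization of Eve(γ_{j_0}) \ {0}. -/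
open Projectivization Matrix Filter Pointwise
open scoped LinearAlgebra.Projectivization

noncomputable section

/-!
Split every `w j` into generalized eigenvectors of `γ̃`. On a generalized eigenvector `a` for `μ`
the binomial formula gives `γ̃ᵐ a = ∑ d, (m choose d) μ^(m-d) (γ̃ - μ)^d a`. Let `D` be the largest
`d` occurring in the components of `w j₀`, and `R = r j₀`. The terms with `d = D` coming from
`w j₀` are eigenvectors in `V j₀`; every other term, including everything coming from the blocks
`j < j₀`, is `o((m choose D) R^(m-D))`. Eigenvectors with distinct eigenvalues do not cancel, so the
dominant part has exactly that size, and the component of `γ̃ᵐ v` transverse to `Eve(γ_{j₀})` is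
`o(‖γ̃ᵐ v‖)`. This relative distance to `Eve(γ_{j₀})` is a continuous function on projective
space, so it vanishes at every cluster point of the orbit.
-/

open Asymptotics Topology

theorem isLittleO_choose_choose_succ (D : ℕ) :
    (fun m : ℕ => (m.choose D : ℝ)) =o[atTop] fun m => (m.choose (D + 1) : ℝ) := by
  have hlim : Tendsto (fun m : ℕ => ((D : ℝ) + 1) / ((m : ℝ) - D)) atTop (𝓝 0) :=
    tendsto_const_nhds.div_atTop <| tendsto_atTop_add_const_right _ _ tendsto_natCast_atTop_atTop
  refine (((isLittleO_one_iff ℝ).2 hlim).mul_isBigO (isBigO_refl _ _)).congr' ?_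
    (Eventually.of_forall fun m => one_mul _)
  filter_upwards [eventually_gt_atTop D] with m hm
  have hmD : (0 : ℝ) < m - D := by rw [sub_pos]; exact_mod_cast hm
  have key : ((m.choose (D + 1) * (D + 1) : ℕ) : ℝ) = (m.choose D * (m - D) : ℕ) :=
    congrArg _ (Nat.choose_succ_right_eq m D)
  push_cast [Nat.cast_sub hm.le] at key
  field_simp
  linarith

theorem isLittleO_choose_of_lt {d D : ℕ} (h : d < D) :
    (fun m : ℕ => (m.choose d : ℝ)) =o[atTop] fun m => (m.choose D : ℝ) := by
  induction D, h using Nat.le_induction with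
  | base => exact isLittleO_choose_choose_succ d
  | succ D _ ih => exact ih.trans (isLittleO_choose_choose_succ D)

theorem isLittleO_choose_mul_pow_sub {d D : ℕ} (R : ℝ) (h : d < D) :
    (fun m : ℕ => (m.choose d : ℝ) * R ^ (m - d)) =o[atTop]
      fun m => (m.choose D : ℝ) * R ^ (m - D) := by
  refine (((isLittleO_choose_of_lt h).mul_isBigO (isBigO_refl (fun m => R ^ (m - D)) _))
    |>.const_mul_left (R ^ (D - d))).congr' ?_ EventuallyEq.rfl
  filter_upwards [eventually_ge_atTop D] with m hm
  rw [mul_left_comm, ← pow_add, add_comm, Nat.sub_add_sub_cancel hm h.le]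

theorem choose_mul_pow_mul_pow_le {ρ δ : ℝ} (hρ : 0 ≤ ρ) (hδ : 0 ≤ δ) (m d : ℕ) :
    (m.choose d : ℝ) * ρ ^ (m - d) * δ ^ d ≤ (δ + ρ) ^ m := by
  rcases lt_or_ge m d with hmd | hdm
  · simp [Nat.choose_eq_zero_of_lt hmd, pow_nonneg (add_nonneg hδ hρ)]
  rw [add_pow]
  refine le_trans (le_of_eq (by ring)) <|
    Finset.single_le_sum (f := fun k => δ ^ k * ρ ^ (m - k) * (m.choose k : ℝ))
      (fun k _ => by positivity) (Finset.mem_range.2 (Nat.lt_succ_of_le hdm))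

theorem isLittleO_choose_mul_pow_of_lt {ρ R : ℝ} (hρ : 0 ≤ ρ) (h : ρ < R) (d : ℕ) :
    (fun m : ℕ => (m.choose d : ℝ) * ρ ^ (m - d)) =o[atTop] fun m => R ^ m := by
  set δ := (R - ρ) / 2
  have hδ : 0 < δ := by simp only [δ]; linarith
  refine IsBigO.trans_isLittleO (g := fun m => (δ + ρ) ^ m) ?_
    (isLittleO_pow_pow_of_lt_left (by linarith) (by simp only [δ]; linarith))
  refine IsBigO.of_bound (δ ^ d)⁻¹ (Eventually.of_forall fun m => ?_)
  rw [Real.norm_of_nonneg (by positivity), Real.norm_of_nonneg (by positivity),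
    le_inv_mul_iff₀ (by positivity), mul_comm]
  exact choose_mul_pow_mul_pow_le hρ hδ.le m d

theorem isBigO_pow_choose_mul_pow_sub {R : ℝ} (hR : 0 ≤ R) (D : ℕ) :
    (fun m : ℕ => R ^ m) =O[atTop] fun m => (m.choose D : ℝ) * R ^ (m - D) := by
  refine IsBigO.of_bound (R ^ D) ?_
  filter_upwards [eventually_ge_atTop D] with m hm
  obtain ⟨k, rfl⟩ := Nat.exists_eq_add_of_le hm
  have hC : (1 : ℝ) ≤ (D + k).choose D := by exact_mod_cast Nat.choose_pos hm
  rw [Real.norm_of_nonneg (by positivity), Real.norm_of_nonneg (by positivity),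
    Nat.add_sub_cancel_left, pow_add]
  exact mul_le_mul_of_nonneg_left (le_mul_of_one_le_left (by positivity) hC) (by positivity)

theorem isLittleO_mkQ_of_isLittleO_sub {α R E : Type*} [Ring R] [SeminormedAddCommGroup E]
    [Module R E] {S : Submodule R E} {l : Filter α} {f g : α → E} {s : α → ℝ}
    (hg : ∀ t, g t ∈ S) (hfg : (fun t => f t - g t) =o[l] s) (hs : s =O[l] g) :
    (fun t => S.mkQ (f t)) =o[l] f := by
  have hfg' : (fun t => f t - g t) =o[l] g := hfg.trans_isBigO hs
  have hgf : g =O[l] f := by simpa using hfg'.right_isBigO_add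
  refine IsBigO.trans_isLittleO (IsBigO.of_bound' (Eventually.of_forall fun t => ?_))
    (hfg'.trans_isBigO hgf)
  rw [show S.mkQ (f t) = S.mkQ (f t - g t) from (Submodule.Quotient.eq S).2 (by simpa using hg t)]
  exact Submodule.Quotient.norm_mk_le S _

namespace Module.End

section Algebra

variable {R M : Type*} [CommRing R] [AddCommGroup M] [Module R M]

theorem pow_apply_eq_sum_choose (f : Module.End R M) (μ : R) {x : M} {κ : ℕ}
    (hx : ((f - μ • 1) ^ κ) x = 0) (m : ℕ) :
    (f ^ m) x = ∑ d ∈ Finset.range κ, ((m.choose d : R) * μ ^ (m - d)) • ((f - μ • 1) ^ d) x := by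
  set g : ℕ → M := fun d => ((m.choose d : R) * μ ^ (m - d)) • ((f - μ • 1) ^ d) x
  have hcomm : Commute (f - μ • 1) (μ • 1) := (Commute.one_right _).smul_right μ
  have expand : (f ^ m) x = ∑ d ∈ Finset.range (m + 1), g d := by
    conv_lhs => rw [← sub_add_cancel f (μ • 1), hcomm.add_pow m]
    rw [LinearMap.sum_apply]
    refine Finset.sum_congr rfl fun d _ => ?_
    simp only [g, Module.End.mul_apply, Module.End.natCast_apply, smul_pow, one_pow,
      LinearMap.smul_apply, Module.End.one_apply, map_nsmul, map_smul, mul_smul,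
      Nat.cast_smul_eq_nsmul]
  have hchoose : ∑ d ∈ Finset.range (m + 1), g d = ∑ d ∈ Finset.range (m + 1 + κ), g d :=
    Finset.sum_subset (Finset.range_subset_range.2 (Nat.le_add_right _ _)) fun d _ hd => by
      simp [g, Nat.choose_eq_zero_of_lt (by simpa using hd : m < d)]
  have hnil : ∑ d ∈ Finset.range κ, g d = ∑ d ∈ Finset.range (m + 1 + κ), g d :=
    Finset.sum_subset (Finset.range_subset_range.2 (Nat.le_add_left _ _)) fun d _ hd => by
      obtain ⟨e, rfl⟩ := Nat.exists_eq_add_of_le' (not_lt.1 (Finset.mem_range.not.1 hd))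
      simp [g, pow_add, Module.End.mul_apply, hx]
  rw [expand, hchoose, hnil]

end Algebra

section Field

variable {K E : Type*} [Field K] [AddCommGroup E] [Module K E]

-- `Eve(γ_{j₀})` is `eigenvectorSpan γ̃ (V j₀)`: the eigenvectors of `γ_{j₀}` are those of `γ̃`
-- lying in `V j₀`.
def eigenvectorSpan (f : Module.End K E) (W : Submodule K E) : Submodule K E :=
  Submodule.span K {u | u ∈ W ∧ ∃ μ, f.HasEigenvector μ u}

theorem mem_eigenvectorSpan_of_mem_eigenspace {f : Module.End K E} {W : Submodule K E} {μ : K}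
    {u : E} (huW : u ∈ W) (hu : u ∈ f.eigenspace μ) : u ∈ f.eigenvectorSpan W := by
  by_cases h0 : u = 0
  · exact h0 ▸ Submodule.zero_mem _
  · exact Submodule.subset_span ⟨huW, μ, hu, h0⟩

theorem exists_eq_sum_maxGenEigenspace_of_mem [FiniteDimensional K E] [IsAlgClosed K]
    (f : Module.End K E) {W : Submodule K E} (hW : ∀ x ∈ W, f x ∈ W) {x : E} (hx : x ∈ W) :
    ∃ (F : Finset K) (a : K → E),
      (∀ μ ∈ F, a μ ∈ W ∧ a μ ∈ f.maxGenEigenspace μ ∧ HasEigenvalue (f.restrict hW) μ) ∧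
        x = ∑ μ ∈ F, a μ := by
  have hmem : (⟨x, hx⟩ : W) ∈ ⨆ μ, maxGenEigenspace (f.restrict hW) μ := by
    rw [iSup_maxGenEigenspace_eq_top]; trivial
  obtain ⟨c, hc, hsum⟩ := Submodule.mem_iSup_iff_exists_finsupp _ _ |>.1 hmem
  refine ⟨c.support, fun μ => c μ, fun μ hμ => ⟨(c μ).2, ?_, ?_⟩, ?_⟩
  · have := hc μ
    rwa [maxGenEigenspace, genEigenspace_restrict] at this
  · refine (hasUnifEigenvalue_iff_hasUnifEigenvalue_one (k := ⊤) (by simp)).1 fun hbot =>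
      Finsupp.mem_support_iff.1 hμ <| (Submodule.eq_bot_iff _).1 hbot _ (hc μ)
  · simpa [Finsupp.sum] using congrArg Subtype.val hsum.symm

theorem exists_pow_sub_smul_apply_eq_zero_and_ne [FiniteDimensional K E] (f : Module.End K E)
    {F : Finset K} {a : K → E} (ha : ∀ μ ∈ F, a μ ∈ f.maxGenEigenspace μ) (hne : ∃ μ ∈ F, a μ ≠ 0) :
    ∃ D : ℕ, (∀ μ ∈ F, ((f - μ • 1) ^ (D + 1)) (a μ) = 0) ∧
      ∃ μ ∈ F, ((f - μ • 1) ^ D) (a μ) ≠ 0 := by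
  classical
  have hex : ∃ k, ∀ μ ∈ F, ((f - μ • (1 : Module.End K E)) ^ k) (a μ) = 0 := by
    refine ⟨Module.finrank K E, fun μ hμ => ?_⟩
    have := ha μ hμ
    rwa [maxGenEigenspace_eq_genEigenspace_finrank, mem_genEigenspace_nat] at this
  have hpos : Nat.find hex ≠ 0 := fun h0 => by
    obtain ⟨μ, hμ, haμ⟩ := hne
    simpa using haμ ((h0 ▸ Nat.find_spec hex) μ hμ)
  refine ⟨Nat.find hex - 1, ?_, ?_⟩
  · rw [Nat.sub_add_cancel (Nat.one_le_iff_ne_zero.2 hpos)]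
    exact Nat.find_spec hex
  · simpa using Nat.find_min hex (Nat.sub_one_lt hpos)

end Field

section Normed

variable {E : Type*} [NormedAddCommGroup E] [NormedSpace ℂ E]

open Polynomial in
theorem isBigO_coeff_of_sum_smul_eigenspace [FiniteDimensional ℂ E] (f : Module.End ℂ E)
    {F : Finset ℂ} {e : ℂ → E} (he : ∀ μ ∈ F, e μ ∈ f.eigenspace μ) {μ₀ : ℂ} (hμ₀ : μ₀ ∈ F)
    (he₀ : e μ₀ ≠ 0) {α : Type*} (l : Filter α) (c : α → ℂ → ℂ) :
    (fun t => c t μ₀) =O[l] fun t => ∑ μ ∈ F, c t μ • e μ := by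
  classical
  -- `aeval f p` kills every `e μ` with `μ ≠ μ₀` and rescales `e μ₀`.
  set p : ℂ[X] := ∏ ν ∈ F.erase μ₀, (X - C ν)
  have hp : ∀ μ ∈ F, μ ≠ μ₀ → p.eval μ = 0 := fun μ hμ hne => by
    simp only [p, eval_prod, eval_sub, eval_X, eval_C]
    exact Finset.prod_eq_zero (Finset.mem_erase.2 ⟨hne, hμ⟩) (sub_self μ)
  have hp₀ : p.eval μ₀ • e μ₀ ≠ 0 := by
    refine smul_ne_zero ?_ he₀
    simp only [p, eval_prod, eval_sub, eval_X, eval_C, Finset.prod_ne_zero_iff]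
    exact fun ν hν => sub_ne_zero.2 (Finset.ne_of_mem_erase hν).symm
  have hproj : ∀ t, aeval f p (∑ μ ∈ F, c t μ • e μ) = c t μ₀ • p.eval μ₀ • e μ₀ := fun t => by
    rw [map_sum, Finset.sum_eq_single_of_mem μ₀ hμ₀]
    · rw [map_smul, aeval_apply_of_mem_apply_eq_smul (mem_eigenspace_iff.1 (he μ₀ hμ₀))]
    · intro μ hμ hne
      rw [map_smul, aeval_apply_of_mem_apply_eq_smul (mem_eigenspace_iff.1 (he μ hμ)),
        hp μ hμ hne, zero_smul, smul_zero]
  have hscale : (fun t => c t μ₀) =O[l] fun t => c t μ₀ • p.eval μ₀ • e μ₀ :=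
    IsBigO.of_bound ‖p.eval μ₀ • e μ₀‖⁻¹ <| Eventually.of_forall fun t => by
      rw [norm_smul (c t μ₀), mul_comm ‖c t μ₀‖, inv_mul_cancel_left₀ (norm_ne_zero_iff.2 hp₀)]
  refine hscale.trans ?_
  simp_rw [← hproj]
  exact (LinearMap.toContinuousLinearMap (aeval f p)).isBigO_comp _ l

theorem isLittleO_pow_apply_of_norm_lt (f : Module.End ℂ E) {ν : ℂ} {a : E}
    (ha : a ∈ f.maxGenEigenspace ν) {R : ℝ} (hν : ‖ν‖ < R) :
    (fun m => (f ^ m) a) =o[atTop] fun m => R ^ m := by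
  obtain ⟨κ, hκ⟩ := (mem_maxGenEigenspace f ν a).1 ha
  simp_rw [pow_apply_eq_sum_choose f ν hκ]
  refine IsLittleO.fun_sum fun d _ => ?_
  refine IsBigO.trans_isLittleO ?_ (isLittleO_choose_mul_pow_of_lt (norm_nonneg ν) hν d)
  refine IsBigO.of_bound ‖((f - ν • (1 : Module.End ℂ E)) ^ d) a‖ (Eventually.of_forall fun m => ?_)
  rw [norm_smul, norm_mul, norm_pow, Complex.norm_natCast, Real.norm_of_nonneg (by positivity),
    mul_comm]

theorem isLittleO_pow_apply_of_forall_hasEigenvalue_norm_lt [FiniteDimensional ℂ E]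
    (f : Module.End ℂ E) {W : Submodule ℂ E} (hW : ∀ x ∈ W, f x ∈ W) {R : ℝ}
    (hR : ∀ μ, HasEigenvalue (f.restrict hW) μ → ‖μ‖ < R) {x : E} (hx : x ∈ W) :
    (fun m => (f ^ m) x) =o[atTop] fun m => R ^ m := by
  obtain ⟨F, a, ha, rfl⟩ := exists_eq_sum_maxGenEigenspace_of_mem f hW hx
  simp_rw [map_sum]
  exact IsLittleO.fun_sum fun μ hμ =>
    isLittleO_pow_apply_of_norm_lt f (ha μ hμ).2.1 (hR μ (ha μ hμ).2.2)

theorem isLittleO_pow_apply_sub_leadingTerm (f : Module.End ℂ E) {μ : ℂ} {a : E} {D : ℕ}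
    (ha : ((f - μ • 1) ^ (D + 1)) a = 0) :
    (fun m => (f ^ m) a - ((m.choose D : ℂ) * μ ^ (m - D)) • ((f - μ • 1) ^ D) a) =o[atTop]
      fun m => (m.choose D : ℝ) * ‖μ‖ ^ (m - D) := by
  simp_rw [pow_apply_eq_sum_choose f μ ha, Finset.sum_range_succ, add_sub_cancel_right]
  refine IsLittleO.fun_sum fun d hd => ?_
  refine IsBigO.trans_isLittleO ?_ (isLittleO_choose_mul_pow_sub ‖μ‖ (Finset.mem_range.1 hd))
  refine IsBigO.of_bound ‖((f - μ • (1 : Module.End ℂ E)) ^ d) a‖ (Eventually.of_forall fun m => ?_)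
  rw [norm_smul, norm_mul, norm_pow, Complex.norm_natCast, Real.norm_of_nonneg (by positivity),
    mul_comm]

theorem isLittleO_mkQ_eigenvectorSpan_pow_apply_add [FiniteDimensional ℂ E]
    (f : Module.End ℂ E) {W : Submodule ℂ E} (hW : ∀ x ∈ W, f x ∈ W) {R : ℝ}
    (heig : ∀ μ, HasEigenvalue (f.restrict hW) μ → ‖μ‖ = R) {x y : E} (hx : x ∈ W)
    (hx0 : x ≠ 0) (hy : (fun m => (f ^ m) y) =o[atTop] fun m => R ^ m) :
    (fun m => (f.eigenvectorSpan W).mkQ ((f ^ m) (x + y))) =o[atTop] fun m => (f ^ m) (x + y) := by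
  obtain ⟨F, a, ha, rfl⟩ := exists_eq_sum_maxGenEigenspace_of_mem f hW hx
  obtain ⟨D, hD, μ₀, hμ₀, he₀⟩ := exists_pow_sub_smul_apply_eq_zero_and_ne f
    (fun μ hμ => (ha μ hμ).2.1) (by by_contra! h; exact hx0 (Finset.sum_eq_zero h))
  have hnorm : ∀ μ ∈ F, ‖μ‖ = R := fun μ hμ => heig μ (ha μ hμ).2.2
  have hR : 0 ≤ R := hnorm μ₀ hμ₀ ▸ norm_nonneg μ₀
  set e : ℂ → E := fun μ => ((f - μ • 1) ^ D) (a μ)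
  have he : ∀ μ ∈ F, e μ ∈ f.eigenspace μ := fun μ hμ => by
    have := hD μ hμ
    rwa [pow_succ', Module.End.mul_apply, LinearMap.sub_apply, LinearMap.smul_apply,
      Module.End.one_apply, sub_eq_zero, ← mem_eigenspace_iff] at this
  set c : ℕ → ℂ → ℂ := fun m μ => (m.choose D : ℂ) * μ ^ (m - D)
  refine isLittleO_mkQ_of_isLittleO_sub (g := fun m => ∑ μ ∈ F, c m μ • e μ)
    (s := fun m => (m.choose D : ℝ) * R ^ (m - D)) (fun m => ?_) ?_ ?_
  · exact Submodule.sum_mem _ fun μ hμ => Submodule.smul_mem _ _ <|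
      mem_eigenvectorSpan_of_mem_eigenspace (Module.End.pow_apply_mem_of_forall_mem D
        (fun z hz => W.sub_mem (hW z hz) (W.smul_mem μ hz)) _ (ha μ hμ).1) (he μ hμ)
  · have hsplit : ∀ m, (f ^ m) (∑ μ ∈ F, a μ + y) - ∑ μ ∈ F, c m μ • e μ =
        ∑ μ ∈ F, ((f ^ m) (a μ) - c m μ • e μ) + (f ^ m) y := fun m => by
      rw [map_add, map_sum, Finset.sum_sub_distrib]
      abel
    simp_rw [hsplit]
    refine (IsLittleO.fun_sum fun μ hμ => ?_).add
      (hy.trans_isBigO (isBigO_pow_choose_mul_pow_sub hR D))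
    simpa only [hnorm μ hμ] using isLittleO_pow_apply_sub_leadingTerm f (hD μ hμ)
  · refine IsBigO.trans (IsBigO.of_bound' (Eventually.of_forall fun m => le_of_eq ?_))
      (isBigO_coeff_of_sum_smul_eigenspace f he hμ₀ he₀ atTop c)
    simp [c, hnorm μ₀ hμ₀, abs_of_nonneg hR]

end Normed

end Module.End

theorem Matrix.SpecialLinearGroup.toLin'_pow_apply {N : ℕ} (A : SpecialLinearGroup (Fin N) ℂ)
    (m : ℕ) (v : Fin N → ℂ) :
    (Matrix.toLin' (A : Matrix (Fin N) (Fin N) ℂ) ^ m) v = SpecialLinearGroup.toLin' (A ^ m) v := by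
  rw [← Matrix.toLin'_pow, ← SpecialLinearGroup.coe_pow]
  rfl

theorem Matrix.SpecialLinearGroup.toLin'_pow_apply_ne_zero {N : ℕ}
    (A : SpecialLinearGroup (Fin N) ℂ) (m : ℕ) {v : Fin N → ℂ} (hv : v ≠ 0) :
    (Matrix.toLin' (A : Matrix (Fin N) (Fin N) ℂ) ^ m) v ≠ 0 := by
  rw [toLin'_pow_apply]
  exact (SpecialLinearGroup.toLin' (A ^ m)).map_ne_zero_iff.2 hv

theorem Matrix.SpecialLinearGroup.pow_smul_mk {N : ℕ} (A : SpecialLinearGroup (Fin N) ℂ)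
    (m : ℕ) {v : Fin N → ℂ} (hv : v ≠ 0) :
    A ^ m • Projectivization.mk ℂ v hv =
      Projectivization.mk ℂ ((Matrix.toLin' (A : Matrix (Fin N) (Fin N) ℂ) ^ m) v)
        (toLin'_pow_apply_ne_zero A m hv) := by
  rw [SL_smul_mk]
  congr 1
  exact (toLin'_pow_apply A m v).symm

theorem rep_mem_of_mapClusterPt {N : ℕ} {α : Type*} {l : Filter α}
    {S : Submodule ℂ (Fin N → ℂ)} {f : α → Fin N → ℂ} (hf : ∀ t, f t ≠ 0)
    (hS : (fun t => S.mkQ (f t)) =o[l] f) {p : PV N}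
    (hp : MapClusterPt p l fun t => Projectivization.mk ℂ (f t) (hf t)) : p.rep ∈ S := by
  have : IsClosed (S : Set (Fin N → ℂ)) := S.closed_of_finiteDimensional
  -- the relative distance to `S` is scale invariant, hence a continuous function on `PV N`
  let φ : PV N → ℝ := Projectivization.lift (fun x => ‖S.mkQ x‖ / ‖(x : Fin N → ℂ)‖)
    fun x y t hxy => by
      have ht : t ≠ 0 := by rintro rfl; exact x.2 (by simpa using hxy)
      rw [hxy, map_smul, norm_smul, norm_smul, mul_div_mul_left _ _ (norm_ne_zero_iff.2 ht)]
  have hφ : Continuous φ := by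
    refine Continuous.quotient_lift (Continuous.div ?_ ?_ fun x => norm_ne_zero_iff.2 x.2) _
    · exact (S.mkQ.continuous_of_finiteDimensional.comp continuous_subtype_val).norm
    · exact continuous_subtype_val.norm
  have hφmk : ∀ x (hx : x ≠ 0), φ (Projectivization.mk ℂ x hx) = ‖S.mkQ x‖ / ‖x‖ :=
    fun x hx => Projectivization.lift_mk _ _ x hx
  have hlim : Tendsto (fun t => φ (Projectivization.mk ℂ (f t) (hf t))) l (𝓝 0) := by
    simpa only [hφmk] using hS.norm_norm.tendsto_div_nhds_zero
  have hφp : φ p = 0 :=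
    eq_of_nhds_neBot ((hp.continuousAt_comp hφ.continuousAt).neBot.mono (inf_le_inf_left _ hlim))
  rw [← p.mk_rep, hφmk, div_eq_zero_iff, norm_eq_zero, norm_eq_zero, Submodule.mkQ_apply,
    Submodule.Quotient.mk_eq_zero] at hφp
  exact hφp.resolve_right p.rep_nonzero

theorem cluster_points_in_eigenspace_general (n : ℕ) (γt : SpecialLinearGroup (Fin (n + 1)) ℂ)
    (γ : PSL (n + 1)) (hγ : (QuotientGroup.mk γt : PSL (n + 1)) = γ)
    (k : ℕ) (r : Fin k → ℝ) (hrmono : StrictMono r)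
    (V : Fin k → Submodule ℂ (Fin (n + 1) → ℂ))
    (hinv : ∀ j, ∀ x ∈ V j,
      Matrix.toLin' (γt : Matrix (Fin (n + 1)) (Fin (n + 1)) ℂ) x ∈ V j)
    (heig : ∀ j (μ : ℂ),
      Module.End.HasEigenvalue
        ((Matrix.toLin' (γt : Matrix (Fin (n + 1)) (Fin (n + 1)) ℂ)).restrict (hinv j)) μ →
      ‖μ‖ = r j)
    (v : Fin (n + 1) → ℂ) (hv : v ≠ 0) (w : Fin k → Fin (n + 1) → ℂ)
    (hw : ∀ j, w j ∈ V j) (hsum : v = ∑ j, w j)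
    (j₀ : Fin k) (hj₀ : w j₀ ≠ 0) (hmax : ∀ j, j₀ < j → w j = 0)
    (p : PV (n + 1))
    (hp : MapClusterPt p Filter.atTop fun m : ℕ => γ ^ m • Projectivization.mk ℂ v hv) :
    p.rep ∈ Submodule.span ℂ {u : Fin (n + 1) → ℂ | u ∈ V j₀ ∧ ∃ μ : ℂ,
      Module.End.HasEigenvector
        (Matrix.toLin' (γt : Matrix (Fin (n + 1)) (Fin (n + 1)) ℂ)) μ u} := by
  set T := Matrix.toLin' (γt : Matrix (Fin (n + 1)) (Fin (n + 1)) ℂ)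
  have horbit : ∀ m : ℕ, γ ^ m • Projectivization.mk ℂ v hv =
      Projectivization.mk ℂ ((T ^ m) v) (γt.toLin'_pow_apply_ne_zero m hv) := fun m => by
    rw [← hγ, ← QuotientGroup.mk_pow, PSL_mk_smul, Matrix.SpecialLinearGroup.pow_smul_mk]
  refine rep_mem_of_mapClusterPt _ ?_ (by simpa only [horbit] using hp)
  have hv' : v = w j₀ + ∑ j ∈ Finset.Iio j₀, w j := by
    rw [hsum, ← Finset.add_sum_erase _ _ (Finset.mem_univ j₀)]
    refine congrArg _ (Finset.sum_subset (fun j hj => ?_) fun j hj hj' => hmax j ?_).symm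
    · simpa using (Finset.mem_Iio.1 hj).ne
    · exact (not_lt.1 (by simpa using hj')).lt_of_ne (Finset.ne_of_mem_erase hj).symm
  rw [hv']
  refine Module.End.isLittleO_mkQ_eigenvectorSpan_pow_apply_add T (hinv j₀) (heig j₀) (hw j₀) hj₀ ?_
  simp_rw [map_sum]
  exact IsLittleO.fun_sum fun j hj =>
    Module.End.isLittleO_pow_apply_of_forall_hasEigenvalue_norm_lt T (hinv j)
      (fun μ hμ => (heig j μ hμ).trans_lt (hrmono (Finset.mem_Iio.1 hj))) (hw j)

/-- Let `γ ∈ PSL(n+1, ℂ)` have a lift `γ̃` whose eigenvalue absolute values are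
`r_1 < … < r_k`, giving a decomposition `ℂ^{n+1} = V_1 ⊕ … ⊕ V_k` into `γ̃`-invariant
subspaces, all eigenvalues of `γ̃` restricted to `V_j` having absolute value `r_j`.
Then for `[v] ∈ ℙⁿ_ℂ` with `v = Σ v_j`, `v_j ∈ V_j`, and `j₀` the largest index with
`v_{j₀} ≠ 0`, every cluster point of `{γᵐ([v])}_{m ∈ ℕ}` lies in the projectivization of
`Eve(γ_{j₀}) \ {0}`, where `Eve(γ_{j₀})` is the span of the eigenvectors of
`γ_{j₀} = r_{j₀}⁻¹ γ̃|_{V_{j₀}}` (equivalently, of the eigenvectors of `γ̃` lying in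
`V_{j₀}`). -/
theorem cluster_points_in_eigenspace (n : ℕ) (γt : SpecialLinearGroup (Fin (n + 1)) ℂ)
    (γ : PSL (n + 1)) (hγ : (QuotientGroup.mk γt : PSL (n + 1)) = γ)
    (k : ℕ) (hk : 0 < k) (r : Fin k → ℝ) (hrpos : ∀ j, 0 < r j) (hrmono : StrictMono r)
    (V : Fin k → Submodule ℂ (Fin (n + 1) → ℂ))
    (hindep : iSupIndep V) (hspan : ⨆ j, V j = ⊤)
    (hinv : ∀ j, ∀ x ∈ V j,
      Matrix.toLin' (γt : Matrix (Fin (n + 1)) (Fin (n + 1)) ℂ) x ∈ V j)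
    (heig : ∀ j (μ : ℂ),
      Module.End.HasEigenvalue
        ((Matrix.toLin' (γt : Matrix (Fin (n + 1)) (Fin (n + 1)) ℂ)).restrict (hinv j)) μ →
      ‖μ‖ = r j)
    (v : Fin (n + 1) → ℂ) (hv : v ≠ 0) (w : Fin k → Fin (n + 1) → ℂ)
    (hw : ∀ j, w j ∈ V j) (hsum : v = ∑ j, w j)
    (j₀ : Fin k) (hj₀ : w j₀ ≠ 0) (hmax : ∀ j, j₀ < j → w j = 0)
    (p : PV (n + 1))
    (hp : MapClusterPt p Filter.atTop fun m : ℕ => γ ^ m • Projectivization.mk ℂ v hv) :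
    p.rep ∈ Submodule.span ℂ {u : Fin (n + 1) → ℂ | u ∈ V j₀ ∧ ∃ μ : ℂ,
      Module.End.HasEigenvector
        (Matrix.toLin' (γt : Matrix (Fin (n + 1)) (Fin (n + 1)) ℂ)) μ u} :=
  cluster_points_in_eigenspace_general n γt γ hγ k r hrmono V hinv heig v hv w hw hsum j₀ hj₀ hmax p
    hp
end
end
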